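/- Suppose e is even, write e' = e/2 and d' = ⌊d/2⌋. The number of partitions α in P_{d,e} with α^∨ = α (symmetric half partitions) equals the binomial coefficient C(d'+e', e'). -/

import Mathlib

/-!
Since `α i + α (rev i) = 2e'`, a symmetric partition is determined by its first `d' = ⌊d/2⌋`
entries, which lie in `[e', 2e']`; for odd `d` the middle entry is forced to be `e'`.
Subtracting `e'` identifies symmetric partitions with weakly decreasing sequences of length `d'`
with entries in `[0, e']`, and `β ↦ (i ↦ i + (e' - β i))` turns these into strictly increasing
maps `Fin d' → Fin (d' + e')`, i.e. into the `d'`-element subsets of a `(d' + e')`-element set.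
-/

open Finset

theorem Fin.val_add_sub_le_of_strictMono {n m : ℕ} {γ : Fin n → Fin m} (hγ : StrictMono γ)
    {a b : Fin n} (hab : a ≤ b) : (γ a : ℕ) + (b - a) ≤ γ b := by
  have hcard := card_le_card_of_injOn γ (s := Icc a b) (t := Icc (γ a) (γ b))
    (fun x hx => by
      simp only [coe_Icc, Set.mem_Icc] at hx ⊢
      exact ⟨hγ.monotone hx.1, hγ.monotone hx.2⟩)
    hγ.injective.injOn
  simp only [Fin.card_Icc] at hcard
  have : (γ a : ℕ) ≤ γ b := hγ.monotone hab
  have : (a : ℕ) ≤ b := hab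
  omega

theorem Nat.card_orderEmbedding_fin (n m : ℕ) : Nat.card (Fin n ↪o Fin m) = m.choose n := by
  rw [Nat.card_congr Set.powersetCard.ofFinEmbEquiv, Set.powersetCard.card, Nat.card_fin]

def boundedAntitoneEquivOrderEmbedding (n k : ℕ) :
    {β : Fin n → ℕ // Antitone β ∧ ∀ i, β i ≤ k} ≃ (Fin n ↪o Fin (n + k)) where
  toFun β := OrderEmbedding.ofStrictMono (fun i => ⟨i + (k - β.1 i), by omega⟩)
    fun _ _ hij => Fin.mk_lt_mk.2 (by have := β.2.1 hij.le; omega)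
  invFun γ := ⟨fun i => k - (γ i - i), fun i j hij => by
    have := Fin.val_add_sub_le_of_strictMono γ.strictMono hij
    have : (i : ℕ) ≤ j := hij
    dsimp only
    omega, fun _ => Nat.sub_le _ _⟩
  left_inv β := by
    ext i
    have := β.2.2 i
    change k - ((i : ℕ) + (k - β.1 i) - i) = β.1 i
    omega
  right_inv γ := by
    ext i
    have hn : 0 < n := i.pos
    have hlow : (γ ⟨0, hn⟩ : ℕ) + (i - 0) ≤ γ i :=
      Fin.val_add_sub_le_of_strictMono γ.strictMono (Nat.zero_le _)
    have hup : (γ i : ℕ) + (n - 1 - i) ≤ γ ⟨n - 1, by omega⟩ :=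
      Fin.val_add_sub_le_of_strictMono γ.strictMono (b := ⟨n - 1, by omega⟩)
        (Nat.le_sub_one_of_lt i.isLt)
    have := (γ ⟨n - 1, by omega⟩).isLt
    change (i : ℕ) + (k - (k - (γ i - i))) = γ i
    omega

theorem Nat.card_boundedAntitone (n k : ℕ) :
    Nat.card {β : Fin n → ℕ // Antitone β ∧ ∀ i, β i ≤ k} = (n + k).choose n := by
  rw [Nat.card_congr (boundedAntitoneEquivOrderEmbedding n k), Nat.card_orderEmbedding_fin]

section ExtendByZero

variable {n : ℕ}

def extendByZero (β : Fin n → ℕ) (m : ℕ) : ℕ := if h : m < n then β ⟨m, h⟩ else 0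

theorem extendByZero_of_lt (β : Fin n → ℕ) {m : ℕ} (h : m < n) :
    extendByZero β m = β ⟨m, h⟩ := dif_pos h

theorem extendByZero_of_le (β : Fin n → ℕ) {m : ℕ} (h : n ≤ m) : extendByZero β m = 0 :=
  dif_neg h.not_gt

theorem extendByZero_le {β : Fin n → ℕ} {k : ℕ} (hβ : ∀ i, β i ≤ k) (m : ℕ) :
    extendByZero β m ≤ k := by
  unfold extendByZero
  split_ifs
  exacts [hβ _, Nat.zero_le k]

theorem Antitone.extendByZero {β : Fin n → ℕ} (hβ : Antitone β) :
    Antitone (_root_.extendByZero β) := by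
  intro a b hab
  unfold _root_.extendByZero
  split_ifs with hb ha ha
  · exact hβ (Fin.mk_le_mk.2 hab)
  · omega
  · exact Nat.zero_le _
  · exact le_rfl

end ExtendByZero

section SymmetricPartition

variable {d e' : ℕ} {α : Fin d → ℕ}

theorem add_apply_rev_eq (hbd : ∀ i, α i ≤ 2 * e')
    (hsym : ∀ i, 2 * e' - α (Fin.rev i) = α i) (i : Fin d) :
    α i + α (Fin.rev i) = 2 * e' := by
  have := hsym i
  have := hbd (Fin.rev i)
  omega

theorem apply_le_of_rev_le (hα : Antitone α) (hsum : ∀ i, α i + α (Fin.rev i) = 2 * e')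
    {i : Fin d} (h : Fin.rev i ≤ i) : α i ≤ e' := by
  have := hα h
  have := hsum i
  omega

theorem extendByZero_eq_zero_or_rev (β : Fin (d / 2) → ℕ) (i : Fin d) :
    extendByZero β i = 0 ∨ extendByZero β (Fin.rev i) = 0 := by
  rcases lt_or_ge (i : ℕ) (d / 2) with h | h
  · exact .inr (extendByZero_of_le β (by rw [Fin.val_rev]; omega))
  · exact .inl (extendByZero_of_le β h)

theorem extendByZero_half_eq_tsub (hα : Antitone α) (hsum : ∀ i, α i + α (Fin.rev i) = 2 * e')
    (j : Fin d) :
    extendByZero (fun i : Fin (d / 2) => α (Fin.castLE (Nat.div_le_self d 2) i) - e') j =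
      α j - e' := by
  rcases lt_or_ge (j : ℕ) (d / 2) with h | h
  · rw [extendByZero_of_lt _ h]
    rfl
  · have := apply_le_of_rev_le hα hsum (i := j) (Fin.le_def.2 (by rw [Fin.val_rev]; omega))
    rw [extendByZero_of_le _ h]
    omega

end SymmetricPartition

def symmetricEquivHalf (d e' : ℕ) :
    {α : Fin d → ℕ //
        Antitone α ∧ (∀ i, α i ≤ 2 * e') ∧ ∀ i, 2 * e' - α (Fin.rev i) = α i} ≃
      {β : Fin (d / 2) → ℕ // Antitone β ∧ ∀ i, β i ≤ e'} where
  toFun α := ⟨fun i => α.1 (Fin.castLE (Nat.div_le_self d 2) i) - e',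
    fun _ _ hij => Nat.sub_le_sub_right (α.2.1 hij) e',
    fun i => by
      have := α.2.2.1 (Fin.castLE (Nat.div_le_self d 2) i)
      dsimp only
      omega⟩
  -- at most one of the two `extendByZero` terms is nonzero
  invFun β := ⟨fun i => e' + extendByZero β.1 i - extendByZero β.1 (Fin.rev i),
    fun i j hij => by
      have := β.2.1.extendByZero (Fin.le_def.1 hij)
      have := β.2.1.extendByZero (Fin.le_def.1 (Fin.rev_le_rev.2 hij))
      dsimp only
      omega,
    fun i => by
      have := extendByZero_le β.2.2 i
      dsimp only
      omega,
    fun i => by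
      have := extendByZero_le β.2.2 i
      have := extendByZero_le β.2.2 (Fin.rev i)
      have := extendByZero_eq_zero_or_rev β.1 i
      dsimp only
      rw [Fin.rev_rev]
      omega⟩
  left_inv α := by
    obtain ⟨α, hα, hbd, hsym⟩ := α
    have hsum := add_apply_rev_eq hbd hsym
    ext i
    have := hsum i
    simp only [extendByZero_half_eq_tsub hα hsum]
    omega
  right_inv β := by
    ext i
    simp only [Fin.val_castLE, extendByZero_of_lt β.1 i.isLt, Fin.eta]
    rw [extendByZero_of_le β.1 (by rw [Fin.val_rev, Fin.val_castLE]; omega)]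
    omega

/-- For `e = 2 * e'` even and `d' = ⌊d/2⌋`, the number of symmetric half partitions in
the `d × e` frame (partitions fixed by the duality `α ↦ α^∨`) is `C(d' + e', e')`. -/
theorem number_of_symmetric_half_partitions (d e' : ℕ) :
    Nat.card {α : Fin d → ℕ //
        (∀ i j : Fin d, i ≤ j → α j ≤ α i) ∧ (∀ i, α i ≤ 2 * e') ∧
        (∀ i, 2 * e' - α (Fin.rev i) = α i)} =
      (d / 2 + e').choose e' :=
  calc _ = Nat.card {β : Fin (d / 2) → ℕ // Antitone β ∧ ∀ i, β i ≤ e'} :=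
        Nat.card_congr (symmetricEquivHalf d e')
    _ = (d / 2 + e').choose (d / 2) := Nat.card_boundedAntitone _ _
    _ = _ := Nat.choose_symm_add
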